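/- arXiv:2412.06572 — 2 statements merged into one kernel-verified Lean document; each statement's English description precedes it below -/
import Mathlib

section
/- Let κ be a quaternionic spinor and ν ∈ ℍ². Then {κ,ν} = 0 if and only if ν = κx for some x ∈ ℍ. -/
open Quaternion

noncomputable section

/-- The involution `q* = a + bi + cj - dk` on quaternions (Clifford reversion). -/
def qstar (q : ℍ[ℝ]) : ℍ[ℝ] := ⟨q.re, q.imI, q.imJ, -q.imK⟩

/-- The involution `q' = a - bi - cj + dk` on quaternions. -/
def qprime (q : ℍ[ℝ]) : ℍ[ℝ] := ⟨q.re, -q.imI, -q.imJ, q.imK⟩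

/-- A paravector is an element of `ℝ + ℝi + ℝj`, i.e. a quaternion with zero `k`-component. -/
def IsParavector (q : ℍ[ℝ]) : Prop := q.imK = 0

/-- The quaternion `k`. -/
def qk : ℍ[ℝ] := ⟨0, 0, 0, 1⟩

/-- A quaternionic spinor: a pair `(ξ, η) ≠ (0,0)` with `ξ * conj η` a paravector. -/
def IsSpinor (κ : ℍ[ℝ] × ℍ[ℝ]) : Prop := κ ≠ 0 ∧ IsParavector (κ.1 * star κ.2)

/-- The bracket `{κ₁, κ₂} = ξ₁* η₂ − η₁* ξ₂`. -/
def bracket (κ₁ κ₂ : ℍ[ℝ] × ℍ[ℝ]) : ℍ[ℝ] := qstar κ₁.1 * κ₂.2 - qstar κ₁.2 * κ₂.1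

/-- Right multiplication `κ x = (ξ x, η x)`. -/
def rmul (κ : ℍ[ℝ] × ℍ[ℝ]) (x : ℍ[ℝ]) : ℍ[ℝ] × ℍ[ℝ] := (κ.1 * x, κ.2 * x)

/-- The complementary pair `κ̌ = (η', −ξ')`. -/
def qcheck (κ : ℍ[ℝ] × ℍ[ℝ]) : ℍ[ℝ] × ℍ[ℝ] := (qprime κ.2, -qprime κ.1)

/-- The real inner product on `ℍ²`: `⟨κ₁, κ₂⟩ = Re (ξ₁ ξ̄₂ + η₁ η̄₂)`. -/
def qinner (κ₁ κ₂ : ℍ[ℝ] × ℍ[ℝ]) : ℝ := (κ₁.1 * star κ₂.1 + κ₁.2 * star κ₂.2).re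

/-- The squared norm `|κ|² = |ξ|² + |η|²` on `ℍ²`. -/
def qnsq (κ : ℍ[ℝ] × ℍ[ℝ]) : ℝ := Quaternion.normSq κ.1 + Quaternion.normSq κ.2

/-! A spinor `κ = (ξ, η)` satisfies `{κ, κ} = 0`, since `{κ, κ} = -2 (ξ η̄)_k · k`, and the bracket
is right `ℍ`-linear in its second argument; this gives `{κ, κ x} = 0`. Conversely, if `ξ ≠ 0` then
`μ = ν - κ (ξ⁻¹ ν₁)` has first component `0` and `{κ, μ} = 0`, i.e. `ξ* μ₂ = 0`, so `μ = 0`. The case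
`η ≠ 0` reduces to this one by swapping components, which only changes the sign of the bracket. -/

@[simp] lemma re_qstar (q : ℍ[ℝ]) : (qstar q).re = q.re := rfl
@[simp] lemma imI_qstar (q : ℍ[ℝ]) : (qstar q).imI = q.imI := rfl
@[simp] lemma imJ_qstar (q : ℍ[ℝ]) : (qstar q).imJ = q.imJ := rfl
@[simp] lemma imK_qstar (q : ℍ[ℝ]) : (qstar q).imK = -q.imK := rfl

@[simp] lemma qstar_eq_zero {q : ℍ[ℝ]} : qstar q = 0 ↔ q = 0 := by
  simp [Quaternion.ext_iff]

@[simp] lemma re_qk : qk.re = 0 := rfl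
@[simp] lemma imI_qk : qk.imI = 0 := rfl
@[simp] lemma imJ_qk : qk.imJ = 0 := rfl
@[simp] lemma imK_qk : qk.imK = 1 := rfl

lemma qk_ne_zero : qk ≠ 0 := fun h => by simpa using congrArg (·.imK) h

lemma bracket_self (κ : ℍ[ℝ] × ℍ[ℝ]) :
    bracket κ κ = (-2 * (κ.1 * star κ.2).imK) • qk := by
  ext <;>
    simp only [bracket, re_sub, imI_sub, imJ_sub, imK_sub, re_mul, imI_mul, imJ_mul, imK_mul,
      re_star, imI_star, imJ_star, imK_star, re_qstar, imI_qstar, imJ_qstar, imK_qstar,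
      re_smul, imI_smul, imJ_smul, imK_smul, re_qk, imI_qk, imJ_qk, imK_qk, smul_eq_mul] <;>
    ring

lemma bracket_self_eq_zero_iff {κ : ℍ[ℝ] × ℍ[ℝ]} :
    bracket κ κ = 0 ↔ IsParavector (κ.1 * star κ.2) := by
  simp [bracket_self, IsParavector, qk_ne_zero]

lemma bracket_sub_right (κ ν μ : ℍ[ℝ] × ℍ[ℝ]) :
    bracket κ (ν - μ) = bracket κ ν - bracket κ μ := by
  simp only [bracket, Prod.fst_sub, Prod.snd_sub, mul_sub]
  abel

lemma bracket_rmul_right (κ ν : ℍ[ℝ] × ℍ[ℝ]) (x : ℍ[ℝ]) :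
    bracket κ (rmul ν x) = bracket κ ν * x := by
  simp only [bracket, rmul, sub_mul, mul_assoc]

lemma bracket_swap (κ ν : ℍ[ℝ] × ℍ[ℝ]) : bracket κ.swap ν.swap = -bracket κ ν := by
  simp only [bracket, Prod.fst_swap, Prod.snd_swap, neg_sub]

lemma rmul_swap (κ : ℍ[ℝ] × ℍ[ℝ]) (x : ℍ[ℝ]) : rmul κ.swap x = (rmul κ x).swap := rfl

lemma bracket_of_fst_eq_zero (κ : ℍ[ℝ] × ℍ[ℝ]) {ν : ℍ[ℝ] × ℍ[ℝ]} (hν : ν.1 = 0) :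
    bracket κ ν = qstar κ.1 * ν.2 := by
  simp [bracket, hν]

lemma eq_rmul_of_fst_ne_zero {κ ν : ℍ[ℝ] × ℍ[ℝ]} (hξ : κ.1 ≠ 0) (hκ : bracket κ κ = 0)
    (hν : bracket κ ν = 0) : ν = rmul κ (κ.1⁻¹ * ν.1) := by
  set μ := ν - rmul κ (κ.1⁻¹ * ν.1)
  have hμ₁ : μ.1 = 0 := by simp [μ, rmul, mul_inv_cancel_left₀ hξ]
  have hμ : bracket κ μ = 0 := by simp [μ, bracket_sub_right, bracket_rmul_right, hκ, hν]
  have hμ₂ : μ.2 = 0 := by simpa [bracket_of_fst_eq_zero κ hμ₁, hξ] using hμ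
  exact sub_eq_zero.mp (Prod.ext hμ₁ hμ₂)

lemma eq_rmul_of_snd_ne_zero {κ ν : ℍ[ℝ] × ℍ[ℝ]} (hη : κ.2 ≠ 0) (hκ : bracket κ κ = 0)
    (hν : bracket κ ν = 0) : ν = rmul κ (κ.2⁻¹ * ν.2) := by
  have := eq_rmul_of_fst_ne_zero (κ := κ.swap) (ν := ν.swap) hη
    (by rw [bracket_swap, hκ, neg_zero]) (by rw [bracket_swap, hν, neg_zero])
  rwa [rmul_swap, Prod.swap_inj] at this

/-- For a quaternionic spinor `κ` and any `ν ∈ ℍ²`, `{κ,ν} = 0` iff `ν = κ x` for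
some quaternion `x`. -/
theorem bracket_eq_zero_iff (κ ν : ℍ[ℝ] × ℍ[ℝ]) (hκ : IsSpinor κ) :
    bracket κ ν = 0 ↔ ∃ x : ℍ[ℝ], ν = rmul κ x := by
  have hκκ : bracket κ κ = 0 := bracket_self_eq_zero_iff.mpr hκ.2
  constructor
  · intro hν
    by_cases hξ : κ.1 = 0
    · have hη : κ.2 ≠ 0 := fun hη => hκ.1 (Prod.ext hξ hη)
      exact ⟨_, eq_rmul_of_snd_ne_zero hη hκκ hν⟩
    · exact ⟨_, eq_rmul_of_fst_ne_zero hξ hκκ hν⟩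
  · rintro ⟨x, rfl⟩
    rw [bracket_rmul_right, hκκ, zero_mul]
end
end

section
/- Let κ = (ξ,η) be a quaternionic spinor. Then the set {(α,β) ∈ ℍ² : α η̄ + ξ β̄ is a paravector} equals {κx + κ̌v : x ∈ ℍ, v ∈ $ℝ³}; every element of this set has a unique representation κx + κ̌v with x ∈ ℍ and v ∈ $ℝ³; and the real subspaces κℍ = {κx : x ∈ ℍ} and κ̌$ℝ³ = {κ̌v : v ∈ $ℝ³} are orthogonal with respect to ⟨·,·⟩. -/
open Quaternion

noncomputable section

/-!
Write `κ = (ξ, η)` and `N = |ξ|² + |η|²`. Up to the factor `N`, the real-linear map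
`(x, w) ↦ κx + κ̌w` of `ℍ²` is inverted by `ν = (α, β) ↦ (ξ̄α + η̄β, -{κ, ν})`: expanding both
compositions, the diagonal terms are norms and each cross term cancels by one of the identities
`ξ̄η' = η̄ξ'`, `η*ξ = ξ*η`, `ξη̄ = η'ξ*`, all consequences of `ξη̄` being a paravector. The tangent
condition on `ν` says exactly that `{κ, ν}` is a paravector, which gives the description of the set
and the uniqueness. Orthogonality reduces, by `Re(ab) = Re(ba)`, to `η*ξ = ξ*η`.
-/

namespace Quaternion

variable (p q : ℍ[ℝ])

@[simp] lemma qprime_re : (qprime q).re = q.re := rfl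
@[simp] lemma qprime_imI : (qprime q).imI = -q.imI := rfl
@[simp] lemma qprime_imJ : (qprime q).imJ = -q.imJ := rfl
@[simp] lemma qprime_imK : (qprime q).imK = q.imK := rfl
@[simp] lemma qstar_re : (qstar q).re = q.re := rfl
@[simp] lemma qstar_imI : (qstar q).imI = q.imI := rfl
@[simp] lemma qstar_imJ : (qstar q).imJ = q.imJ := rfl
@[simp] lemma qstar_imK : (qstar q).imK = -q.imK := rfl

lemma re_mul_comm : (p * q).re = (q * p).re := by
  simp only [re_mul]; ring

lemma qprime_mul : qprime (p * q) = qprime p * qprime q := by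
  ext <;> simp only [re_mul, imI_mul, imJ_mul, imK_mul, qprime_re, qprime_imI, qprime_imJ,
    qprime_imK] <;> ring

lemma qprime_qprime : qprime (qprime q) = q := by
  ext <;> simp

lemma qprime_star : qprime (star q) = qstar q := by
  ext <;> simp

lemma star_qprime : star (qprime q) = qstar q := by
  ext <;> simp

lemma qstar_mul_qprime : qstar q * qprime q = normSq q := by
  rw [← star_qprime, star_mul_self, normSq_def', normSq_def']; simp

lemma qprime_mul_qstar : qprime q * qstar q = normSq q := by
  rw [← star_qprime, self_mul_star, normSq_def', normSq_def']; simp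

end Quaternion

lemma isParavector_iff_qstar_eq {p : ℍ[ℝ]} : IsParavector p ↔ qstar p = p := by
  simp [IsParavector, Quaternion.ext_iff, neg_eq_self]

lemma IsParavector.star {p : ℍ[ℝ]} (h : IsParavector p) : IsParavector (star p) := by
  simpa [IsParavector] using h

lemma IsParavector.smul {p : ℍ[ℝ]} (h : IsParavector p) (c : ℝ) : IsParavector (c • p) := by
  unfold IsParavector at h ⊢
  rw [imK_smul, h, smul_zero]

section
variable {ξ η : ℍ[ℝ]}

lemma star_mul_qprime_comm (h : IsParavector (ξ * star η)) :
    star ξ * qprime η = star η * qprime ξ := by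
  simp only [IsParavector, imK_mul, re_star, imI_star, imJ_star, imK_star] at h
  ext <;> simp only [re_mul, imI_mul, imJ_mul, imK_mul, re_star, imI_star, imJ_star, imK_star,
    qprime_re, qprime_imI, qprime_imJ, qprime_imK] <;> [ring; ring; ring; linear_combination -2 * h]

lemma qstar_mul_comm (h : IsParavector (ξ * star η)) : qstar η * ξ = qstar ξ * η := by
  simpa only [qprime_mul, ← qprime_star, qprime_qprime] using
    (congrArg qprime (star_mul_qprime_comm h)).symm

lemma mul_star_eq_qprime_mul_qstar (h : IsParavector (ξ * star η)) :
    ξ * star η = qprime η * qstar ξ := by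
  calc ξ * star η = qstar (ξ * star η) := (isParavector_iff_qstar_eq.1 h).symm
    _ = qprime (η * star ξ) := by rw [← qprime_star, star_mul_star]
    _ = qprime η * qstar ξ := by rw [qprime_mul, qprime_star]

lemma mul_star_eq_qprime_mul_qstar_symm (h : IsParavector (ξ * star η)) :
    η * star ξ = qprime ξ * qstar η :=
  mul_star_eq_qprime_mul_qstar (by simpa only [star_mul_star] using h.star)

end

lemma rmul_smul (κ : ℍ[ℝ] × ℍ[ℝ]) (c : ℝ) (x : ℍ[ℝ]) : rmul κ (c • x) = c • rmul κ x := by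
  simp only [rmul, mul_smul_comm, Prod.smul_mk]

lemma qnsq_ne_zero {κ : ℍ[ℝ] × ℍ[ℝ]} (h : κ ≠ 0) : qnsq κ ≠ 0 := by
  contrapose! h
  rw [qnsq, add_eq_zero_iff_of_nonneg normSq_nonneg normSq_nonneg] at h
  exact Prod.ext (normSq_eq_zero.1 h.1) (normSq_eq_zero.1 h.2)

def hermProd (κ ν : ℍ[ℝ] × ℍ[ℝ]) : ℍ[ℝ] := star κ.1 * ν.1 + star κ.2 * ν.2

lemma isParavector_tangent_iff_bracket (κ ν : ℍ[ℝ] × ℍ[ℝ]) :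
    IsParavector (ν.1 * star κ.2 + κ.1 * star ν.2) ↔ IsParavector (bracket κ ν) := by
  simp only [IsParavector, bracket, imK_add, imK_sub, imK_mul, re_star, imI_star, imJ_star,
    imK_star, qstar_re, qstar_imI, qstar_imJ, qstar_imK]
  constructor <;> intro h <;> linear_combination -h

section
variable {κ : ℍ[ℝ] × ℍ[ℝ]} (hκ : IsParavector (κ.1 * star κ.2))
include hκ

lemma hermProd_rmul_add_rmul_qcheck (x w : ℍ[ℝ]) :
    hermProd κ (rmul κ x + rmul (qcheck κ) w) = qnsq κ • x := by
  obtain ⟨ξ, η⟩ := κ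
  calc star ξ * (ξ * x + qprime η * w) + star η * (η * x + -qprime ξ * w)
      = (star ξ * ξ + star η * η) * x + (star ξ * qprime η - star η * qprime ξ) * w := by
        noncomm_ring
    _ = qnsq (ξ, η) • x := by
        rw [star_mul_qprime_comm hκ, sub_self, zero_mul, add_zero, star_mul_self, star_mul_self,
          ← coe_add, coe_mul_eq_smul, qnsq]

lemma bracket_rmul_add_rmul_qcheck (x w : ℍ[ℝ]) :
    bracket κ (rmul κ x + rmul (qcheck κ) w) = -(qnsq κ • w) := by
  obtain ⟨ξ, η⟩ := κ
  calc qstar ξ * (η * x + -qprime ξ * w) - qstar η * (ξ * x + qprime η * w)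
      = (qstar ξ * η - qstar η * ξ) * x - (qstar ξ * qprime ξ + qstar η * qprime η) * w := by
        noncomm_ring
    _ = -(qnsq (ξ, η) • w) := by
        rw [qstar_mul_comm hκ, sub_self, zero_mul, zero_sub, qstar_mul_qprime, qstar_mul_qprime,
          ← coe_add, coe_mul_eq_smul, qnsq]

lemma rmul_hermProd_sub_rmul_qcheck_bracket (ν : ℍ[ℝ] × ℍ[ℝ]) :
    rmul κ (hermProd κ ν) - rmul (qcheck κ) (bracket κ ν) = qnsq κ • ν := by
  obtain ⟨ξ, η⟩ := κ
  obtain ⟨α, β⟩ := ν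
  refine Prod.ext ?_ ?_
  · calc ξ * (star ξ * α + star η * β) - qprime η * (qstar ξ * β - qstar η * α)
        = (ξ * star ξ + qprime η * qstar η) * α + (ξ * star η - qprime η * qstar ξ) * β := by
          noncomm_ring
      _ = qnsq (ξ, η) • α := by
          rw [mul_star_eq_qprime_mul_qstar hκ, sub_self, zero_mul, add_zero, self_mul_star,
            qprime_mul_qstar, ← coe_add, coe_mul_eq_smul, qnsq]
  · calc η * (star ξ * α + star η * β) - -qprime ξ * (qstar ξ * β - qstar η * α)
        = (η * star ξ - qprime ξ * qstar η) * α + (η * star η + qprime ξ * qstar ξ) * β := by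
          noncomm_ring
      _ = qnsq (ξ, η) • β := by
          rw [mul_star_eq_qprime_mul_qstar_symm hκ, sub_self, zero_mul, zero_add, self_mul_star,
            qprime_mul_qstar, ← coe_add, coe_mul_eq_smul, qnsq, add_comm]

lemma qinner_rmul_rmul_qcheck (x v : ℍ[ℝ]) : qinner (rmul κ x) (rmul (qcheck κ) v) = 0 := by
  obtain ⟨ξ, η⟩ := κ
  calc (ξ * x * star (qprime η * v) + η * x * star (-qprime ξ * v)).re
      = (ξ * x * star v * qstar η).re - (η * x * star v * qstar ξ).re := by
        simp only [star_mul, star_neg, star_qprime, neg_mul, mul_neg, ← sub_eq_add_neg, re_sub,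
          mul_assoc]
    _ = (qstar η * (ξ * x * star v)).re - (qstar ξ * (η * x * star v)).re := by
        rw [re_mul_comm (ξ * x * star v), re_mul_comm (η * x * star v)]
    _ = 0 := by simp only [← mul_assoc, qstar_mul_comm hκ, sub_self]

end

/-- The tangent space to `Sℍ` at a spinor `κ = (ξ,η)`:
the set `{(α,β) : α η̄ + ξ β̄ is a paravector}` equals `κℍ ⊕ κ̌$ℝ³`, the representation
`κx + κ̌v` (with `v` a paravector) is unique, and the two summands are orthogonal. -/
theorem tangent_space_spinors (κ : ℍ[ℝ] × ℍ[ℝ]) (hκ : IsSpinor κ) :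
    ({ν : ℍ[ℝ] × ℍ[ℝ] | IsParavector (ν.1 * star κ.2 + κ.1 * star ν.2)} =
      {ν : ℍ[ℝ] × ℍ[ℝ] | ∃ x v : ℍ[ℝ], IsParavector v ∧ ν = rmul κ x + rmul (qcheck κ) v}) ∧
    (∀ x₁ v₁ x₂ v₂ : ℍ[ℝ], IsParavector v₁ → IsParavector v₂ →
      rmul κ x₁ + rmul (qcheck κ) v₁ = rmul κ x₂ + rmul (qcheck κ) v₂ → x₁ = x₂ ∧ v₁ = v₂) ∧
    (∀ x v : ℍ[ℝ], IsParavector v → qinner (rmul κ x) (rmul (qcheck κ) v) = 0) := by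
  obtain ⟨hne, hκ⟩ := hκ
  have hN := qnsq_ne_zero hne
  refine ⟨Set.ext fun ν => ⟨fun hν => ?_, ?_⟩, fun x₁ v₁ x₂ v₂ _ _ heq => ⟨?_, ?_⟩,
    fun x v _ => qinner_rmul_rmul_qcheck hκ x v⟩
  · have hb : IsParavector (bracket κ ν) := (isParavector_tangent_iff_bracket κ ν).1 hν
    refine ⟨(qnsq κ)⁻¹ • hermProd κ ν, (-(qnsq κ)⁻¹) • bracket κ ν, hb.smul _, ?_⟩
    rw [rmul_smul, rmul_smul, neg_smul, ← sub_eq_add_neg, ← smul_sub,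
      rmul_hermProd_sub_rmul_qcheck_bracket hκ, inv_smul_smul₀ hN]
  · rintro ⟨x, v, hv, rfl⟩
    refine (isParavector_tangent_iff_bracket _ _).2 ?_
    rw [bracket_rmul_add_rmul_qcheck hκ, ← neg_smul]
    exact hv.smul _
  · apply smul_right_injective ℍ[ℝ] hN
    simpa only [hermProd_rmul_add_rmul_qcheck hκ] using congrArg (hermProd κ) heq
  · apply smul_right_injective ℍ[ℝ] hN
    simpa only [bracket_rmul_add_rmul_qcheck hκ, neg_inj] using congrArg (bracket κ) heq
end
end
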